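/- arXiv:2504.00301 — 2 statements merged into one kernel-verified Lean document; each statement's English description precedes it below -/
import Mathlib

section
/- Fix N ≥ 2, real numbers 0 < a_1 < ... < a_N and p_1, ..., p_{N−1} > 0, and set q_{N−1} := p_1 + ... + p_{N−1}. For p_N > 0, let s(p_N) denote the unique stationary tuple for the parameters (a_1,...,a_N, p_1,...,p_N), and let s' denote the unique stationary tuple for the parameters (a_1,...,a_{N−1}, p_1,...,p_{N−1}). Then, with the convention s_0 = s'_0 = 0, as p_N → 0⁺: for every i ∈ {1,...,N−1}, s_i(p_N) − s_{i−1}(p_N) converges to s'_i − s'_{i−1}, and s_N(p_N) − s_{N−1}(p_N) converges to (a_N − a_{N−1})/q_{N−1}. -/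
open Filter Topology
open scoped Classical

noncomputable section

/-- The positive part `x₊ = max x 0` of a real number. -/
def pos' (x : ℝ) : ℝ := max x 0

/-- `qq p i = p 1 + ... + p i` (so `qq p 0 = 0`). -/
def qq (p : ℕ → ℝ) (i : ℕ) : ℝ := ∑ j ∈ Finset.Icc 1 i, p j

/-- `dpar a i = a i - a (i-1)`, with the convention `a 0 = 0`. -/
def dpar (a : ℕ → ℝ) (i : ℕ) : ℝ := if i = 1 then a 1 else a i - a (i - 1)

/-- `(a, p)` is a parameter tuple in `P^{2N}`:
`0 < a 1 < a 2 < ... < a N` and `p 1, ..., p N > 0`. -/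
def IsParam (N : ℕ) (a p : ℕ → ℝ) : Prop :=
  0 < a 1 ∧ (∀ i, 1 ≤ i → i < N → a i < a (i + 1)) ∧ (∀ i, 1 ≤ i → i ≤ N → 0 < p i)

/-- `s` is a stationary tuple for the parameters `(a, p)`:
`0 < s 1 < ... < s N` and `a i = ∑_{j=1}^N p j * (s i - s j + s 1)₊` for `1 ≤ i ≤ N`. -/
def IsStationaryTuple (N : ℕ) (a p s : ℕ → ℝ) : Prop :=
  0 < s 1 ∧ (∀ i, 1 ≤ i → i < N → s i < s (i + 1)) ∧
  ∀ i, 1 ≤ i → i ≤ N → a i = ∑ j ∈ Finset.Icc 1 N, p j * pos' (s i - s j + s 1)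

/-- The inverse of (the restriction to `[0, ∞)` of) a function `y : ℝ → ℝ`. -/
def tinv (y : ℝ → ℝ) (x : ℝ) : ℝ := Function.invFunOn y (Set.Ici 0) x

/-- The right derivative of `y` at `t` (the derivative of `y` at `t` within `[t, ∞)`). -/
def rD (y : ℝ → ℝ) (t : ℝ) : ℝ := derivWithin y (Set.Ici t) t

/-- The sequence `(y k)` satisfies recurrence (R).  The condition on the initial function `y 0`
(continuous, piecewise linear with at most `N` points of non-differentiability, vanishing at `0`,
with non-decreasing right derivative taking values in `{q 1, ..., q N}`) is encoded through its
canonical representation: such functions are exactly those of the form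
`t ↦ ∑_{j=1}^N p j * (t - c j)₊` with `c` non-negative, non-decreasing and `c 1 = 0`. -/
def SatisfiesR (N : ℕ) (a p : ℕ → ℝ) (y : ℕ → ℝ → ℝ) : Prop :=
  (∃ c : ℕ → ℝ, c 1 = 0 ∧ (∀ j, 1 ≤ j → j ≤ N → 0 ≤ c j) ∧
      (∀ j, 1 ≤ j → j < N → c j ≤ c (j + 1)) ∧
      ∀ t : ℝ, 0 ≤ t → y 0 t = ∑ j ∈ Finset.Icc 1 N, p j * pos' (t - c j)) ∧
  ∀ k : ℕ, ∀ t : ℝ, 0 ≤ t →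
    y (k + 1) t = ∑ j ∈ Finset.Icc 1 N, p j * pos' (t - tinv (y k) (a j) + tinv (y k) (a 1))

/-- The breakpoints `c j` of the lower bounding trajectory `y₀⁻`:
`c 1 = 0` and `c j = d 1 / q 1 + ∑_{l=2}^j d l / q (l-1)` for `j ≥ 2`. -/
def cminus (a p : ℕ → ℝ) (j : ℕ) : ℝ :=
  if j ≤ 1 then 0
  else a 1 / qq p 1 + ∑ l ∈ Finset.Icc 2 j, (a l - a (l - 1)) / qq p (l - 1)

/-- The lower bounding initial trajectory `y₀⁻`. -/
def yminus0 (N : ℕ) (a p : ℕ → ℝ) : ℝ → ℝ :=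
  fun t => ∑ j ∈ Finset.Icc 1 N, p j * pos' (t - cminus a p j)

/-- The upper bounding initial trajectory `y₀⁺ : t ↦ q N * t`. -/
def yplus0 (N : ℕ) (p : ℕ → ℝ) : ℝ → ℝ := fun t => qq p N * t

/-- The sequence satisfying recurrence (R) with prescribed initial term `y0`. -/
def iterR (N : ℕ) (a p : ℕ → ℝ) (y0 : ℝ → ℝ) : ℕ → ℝ → ℝ
  | 0 => y0
  | k + 1 => fun t =>
      ∑ j ∈ Finset.Icc 1 N,
        p j * pos' (t - tinv (iterR N a p y0 k) (a j) + tinv (iterR N a p y0 k) (a 1))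

/-- `y` is a stationary trajectory: an increasing bijection of `[0,∞)` satisfying the
fixed-point equation of recurrence (R). -/
def IsStatTraj (N : ℕ) (a p : ℕ → ℝ) (y : ℝ → ℝ) : Prop :=
  StrictMonoOn y (Set.Ici 0) ∧ Set.BijOn y (Set.Ici 0) (Set.Ici 0) ∧
  ∀ t : ℝ, 0 ≤ t → y t = ∑ j ∈ Finset.Icc 1 N, p j * pos' (t - tinv y (a j) + tinv y (a 1))

/-- `E_N`: the set of pairs `(i, j)` with `1 ≤ i < j ≤ N`. -/
def ENfin (N : ℕ) : Finset (ℕ × ℕ) :=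
  (Finset.Icc 1 N ×ˢ Finset.Icc 1 N).filter fun e => e.1 < e.2

/-- `Nested e e'` means `e ≼_E e'`, i.e. `e` is nested in `e'`. -/
def Nested (e e' : ℕ × ℕ) : Prop := e'.1 ≤ e.1 ∧ e.1 < e.2 ∧ e.2 ≤ e'.2

/-- `E` is the edge set of a downward closed graph on `{1, ..., N}`. -/
def IsDCGraph (N : ℕ) (E : Finset (ℕ × ℕ)) : Prop :=
  E ⊆ ENfin N ∧ ∀ e ∈ E, ∀ e' : ℕ × ℕ, Nested e' e → e' ∈ E

/-- `bG E i` is the greatest `j > i` with `(i, j) ∈ E`, and `i` if there is no such `j`;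
by convention `bG E 0 = 1`. -/
def bG (E : Finset (ℕ × ℕ)) (i : ℕ) : ℕ :=
  if i = 0 then 1 else max i ((E.filter fun e => e.1 = i).sup fun e => e.2)

/-- `m(G)`: the maximal elements of `E` for `≼_E`. -/
def maxE (E : Finset (ℕ × ℕ)) : Finset (ℕ × ℕ) :=
  E.filter fun e => ∀ e' ∈ E, Nested e e' → e' = e

/-- `M(G)`: the minimal elements of `E_N \ E` for `≼_E`. -/
def minNE (N : ℕ) (E : Finset (ℕ × ℕ)) : Finset (ℕ × ℕ) :=
  (ENfin N \ E).filter fun e => ∀ e' ∈ ENfin N \ E, Nested e' e → e' = e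

/-- The map `T(G) : ℝ^N → ℝ^N`. -/
def TG (a p : ℕ → ℝ) (E : Finset (ℕ × ℕ)) (s : ℕ → ℝ) (i : ℕ) : ℝ :=
  (1 / qq p (bG E i)) * (a i + ∑ j ∈ Finset.Icc 1 (bG E i), p j * (s j - s 1))

/-- The product of `γ` over the consecutive pairs (edges) of a list of vertices. -/
def pathProd (γ : ℕ → ℕ → ℝ) (l : List ℕ) : ℝ := (List.zipWith γ l l.tail).prod

/-- `Γ i j`: the sum, over all directed paths from `i` to `j` using edges of `E`, of the
product of `γ` over the edges of the path.  Since all edges of a DC graph increase, a directed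
path from `i` to `j` is identified with the set `S ⊆ (i, j)` of its intermediate vertices,
subject to consecutive vertices being joined by edges of `E`. -/
def GammaPath (E : Finset (ℕ × ℕ)) (γ : ℕ → ℕ → ℝ) (i j : ℕ) : ℝ :=
  if i = j then 1
  else if i < j then
    ∑ S ∈ (Finset.Ioo i j).powerset,
      if List.Chain' (fun u v => (u, v) ∈ E) (Finset.sort (insert i (insert j S)) (· ≤ ·))
      then pathProd γ (Finset.sort (insert i (insert j S)) (· ≤ ·)) else 0
  else 0

/-- The edge weight `γ^G_{i,j}`. -/
def gammaG (p : ℕ → ℝ) (E : Finset (ℕ × ℕ)) (i j : ℕ) : ℝ :=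
  (qq p (bG E i) - qq p (max (j - 1) (bG E (i - 1)))) / qq p (bG E (i - 1))

/-- `Γ^G_{i,j}`. -/
def GammaG (p : ℕ → ℝ) (E : Finset (ℕ × ℕ)) (i j : ℕ) : ℝ := GammaPath E (gammaG p E) i j

/-- `z_1^G (a, p)`. -/
def z1G (N : ℕ) (a p : ℕ → ℝ) (E : Finset (ℕ × ℕ)) : ℝ :=
  (∑ j ∈ Finset.Icc 1 N, GammaG p E 1 j * dpar a j / qq p (bG E (j - 1))) /
  (1 + ∑ j ∈ Finset.Icc 1 N,
      GammaG p E 1 j * (qq p (bG E j) - qq p (bG E (j - 1))) / qq p (bG E (j - 1)))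

/-- `z_i^G (a, p)`. -/
def zG (N : ℕ) (a p : ℕ → ℝ) (E : Finset (ℕ × ℕ)) (i : ℕ) : ℝ :=
  if i = 1 then z1G N a p E
  else
    (∑ j ∈ Finset.Icc i N, GammaG p E i j * dpar a j / qq p (bG E (j - 1))) -
      z1G N a p E *
        ∑ j ∈ Finset.Icc i N,
          GammaG p E i j * (qq p (bG E j) - qq p (bG E (j - 1))) / qq p (bG E (j - 1))

/-- `Z^G_{i,j} (a, p) = z_{i+1}^G + ... + z_j^G`. -/
def ZG (N : ℕ) (a p : ℕ → ℝ) (E : Finset (ℕ × ℕ)) (i j : ℕ) : ℝ :=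
  ∑ l ∈ Finset.Icc (i + 1) j, zG N a p E l

/-- The DC graph `Gr(a, p)` read off from the stationary tuple `s = s(a, p)`: its edges are
the pairs `(i, j) ∈ E_N` with `s 1 > s j - s i`. -/
def GrEdges (N : ℕ) (s : ℕ → ℝ) : Finset (ℕ × ℕ) :=
  (ENfin N).filter fun e => s e.2 - s e.1 < s 1

/-- `ζ` solves the linear system `S^G (a, p)`. -/
def SolvesS (N : ℕ) (a p : ℕ → ℝ) (E : Finset (ℕ × ℕ)) (ζ : ℕ → ℝ) : Prop :=
  ∀ i, 1 ≤ i → i ≤ N →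
    a i = ∑ j ∈ Finset.Icc 1 (bG E i),
      p j * ((∑ l ∈ Finset.Icc 1 i, ζ l) - (∑ l ∈ Finset.Icc 1 j, ζ l) + ζ 1)

/-- `P^{2N}`, viewed as a (cylinder) subset of the space of pairs of real sequences; only the
coordinates `a 1, ..., a N, p 1, ..., p N` are constrained. -/
def Pset (N : ℕ) : Set ((ℕ → ℝ) × (ℕ → ℝ)) := {ap | IsParam N ap.1 ap.2}

/-- The region `P_G = {(a, p) ∈ P^{2N} : Gr(a, p) = G}`. -/
def PGset (N : ℕ) (E : Finset (ℕ × ℕ)) : Set ((ℕ → ℝ) × (ℕ → ℝ)) :=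
  {ap | IsParam N ap.1 ap.2 ∧ ∃ s : ℕ → ℝ, IsStationaryTuple N ap.1 ap.2 s ∧ GrEdges N s = E}

/-- The boundary of `P_G` relative to `P^{2N}`.  Since `P^{2N}` is open, the closure of `P_G`
relative to `P^{2N}` is `closure (PGset N E) ∩ Pset N` and its relative interior is
`interior (PGset N E)`. -/
def relBoundary (N : ℕ) (E : Finset (ℕ × ℕ)) : Set ((ℕ → ℝ) × (ℕ → ℝ)) :=
  (closure (PGset N E) ∩ Pset N) \ interior (PGset N E)

/-- The trajectory `y^{(m)}` built from a tuple `s`: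
`t ↦ ∑_{j=1}^N p j * (t - s j + s 1)₊`. -/
def trajOfS (N : ℕ) (p s : ℕ → ℝ) : ℝ → ℝ :=
  fun t => ∑ j ∈ Finset.Icc 1 N, p j * pos' (t - s j + s 1)

/-- The DC graph `G^{(m)}` associated with a tuple `s`: its edges are the `(i, j) ∈ E_N` with
`t^{(m)} (a i) - s j + s 1 > 0`, where `t^{(m)}` is the inverse of `trajOfS N p s`. -/
def GrFromS (N : ℕ) (a p s : ℕ → ℝ) : Finset (ℕ × ℕ) :=
  (ENfin N).filter fun e => 0 < tinv (trajOfS N p s) (a e.1) - s e.2 + s 1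

end

/-! The tuple `σ = (s'₁, …, s'_{N-1}, s'_{N-1} + (a_N - a_{N-1}) / q_{N-1})` solves the
stationarity equations with `p_N = ε` up to an error `ε s'₁`: the only new term is the one
weighted by `ε`, and past `s'_{N-1}` the trajectory of `s'` is affine of slope `q_{N-1}`.
The stationarity equations are stable by a maximum principle: at an index maximising
`t_i - s_i` every term moves the same way, so the `j = 1` term `p₁ (t_i - s_i)` is bounded by
the residual; at a minimising index the other terms are then controlled as well. Hence
`|s(ε) - σ| = O(ε)`. -/

lemma pos'_of_nonneg {x : ℝ} (h : 0 ≤ x) : pos' x = x := max_eq_left h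

lemma pos'_mono {x y : ℝ} (h : x ≤ y) : pos' x ≤ pos' y := max_le_max_right 0 h

lemma pos'_sub_pos'_le {x y c : ℝ} (h : x - y ≤ c) (hc : 0 ≤ c) : pos' x - pos' y ≤ c :=
  (max_sub_max_le_max x 0 y 0).trans (by simpa using max_le h hc)

section StationaryTuple

variable {N : ℕ} {a p s : ℕ → ℝ}

lemma IsStationaryTuple.strictMonoOn (hs : IsStationaryTuple N a p s) :
    StrictMonoOn s (Set.Icc 1 N) :=
  strictMonoOn_of_lt_succ Set.ordConnected_Icc fun i _ (hi : i ∈ Set.Icc 1 N)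
    (hi' : Order.succ i ∈ Set.Icc 1 N) => hs.2.1 i hi.1 (Order.succ_le_iff.mp hi'.2)

lemma IsStationaryTuple.le_of_le (hs : IsStationaryTuple N a p s) {i j : ℕ} (hi : 1 ≤ i)
    (hij : i ≤ j) (hj : j ≤ N) : s i ≤ s j :=
  hs.strictMonoOn.monotoneOn ⟨hi, hij.trans hj⟩ ⟨hi.trans hij, hj⟩ hij

lemma IsStationaryTuple.pos (hs : IsStationaryTuple N a p s) {i : ℕ}
    (hi : i ∈ Finset.Icc 1 N) : 0 < s i := by
  obtain ⟨h1, hN⟩ := Finset.mem_Icc.mp hi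
  exact hs.1.trans_le (hs.le_of_le le_rfl h1 hN)

lemma IsStationaryTuple.trajOfS_self (hs : IsStationaryTuple N a p s) {i : ℕ}
    (hi : i ∈ Finset.Icc 1 N) : trajOfS N p s (s i) = a i :=
  (hs.2.2 i (Finset.mem_Icc.mp hi).1 (Finset.mem_Icc.mp hi).2).symm

end StationaryTuple

section Stability

variable {N : ℕ} {p s t : ℕ → ℝ}

lemma trajOfS_sub_trajOfS {i : ℕ} :
    trajOfS N p t (t i) - trajOfS N p s (s i) =
      ∑ j ∈ Finset.Icc 1 N, p j * (pos' (t i - t j + t 1) - pos' (s i - s j + s 1)) := by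
  simp only [trajOfS, mul_sub, Finset.sum_sub_distrib]

lemma sub_le_of_trajOfS_sub_le (hN : 1 ≤ N) (hp1 : 0 < p 1)
    (hp : ∀ j ∈ Finset.Icc 1 N, 0 ≤ p j)
    (hs : ∀ i ∈ Finset.Icc 1 N, 0 ≤ s i) (ht : ∀ i ∈ Finset.Icc 1 N, 0 ≤ t i)
    (h1 : s 1 ≤ t 1) {η : ℝ}
    (hη : ∀ i ∈ Finset.Icc 1 N, trajOfS N p t (t i) - trajOfS N p s (s i) ≤ η) :
    ∀ i ∈ Finset.Icc 1 N, t i - s i ≤ η / p 1 := by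
  have h1mem : 1 ∈ Finset.Icc 1 N := Finset.mem_Icc.mpr ⟨le_rfl, hN⟩
  obtain ⟨i₀, hi₀, hmax⟩ :=
    Finset.exists_max_image (Finset.Icc 1 N) (fun i => t i - s i) ⟨1, h1mem⟩
  have hterm : ∀ j ∈ Finset.Icc 1 N,
      0 ≤ p j * (pos' (t i₀ - t j + t 1) - pos' (s i₀ - s j + s 1)) := fun j hj =>
    mul_nonneg (hp j hj) (sub_nonneg.mpr (pos'_mono (by linarith [hmax j hj])))
  have hkey : p 1 * (t i₀ - s i₀) ≤ η := by
    calc p 1 * (t i₀ - s i₀)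
        = p 1 * (pos' (t i₀ - t 1 + t 1) - pos' (s i₀ - s 1 + s 1)) := by
          simp only [sub_add_cancel, pos'_of_nonneg (hs i₀ hi₀), pos'_of_nonneg (ht i₀ hi₀)]
      _ ≤ trajOfS N p t (t i₀) - trajOfS N p s (s i₀) := by
          rw [trajOfS_sub_trajOfS]
          exact Finset.single_le_sum hterm h1mem
      _ ≤ η := hη i₀ hi₀
  intro i hi
  rw [le_div_iff₀ hp1]
  nlinarith [hmax i hi]

lemma le_sub_of_abs_trajOfS_sub_le (hN : 1 ≤ N) (hp1 : 0 < p 1)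
    (hp : ∀ j ∈ Finset.Icc 1 N, 0 ≤ p j)
    (hs : ∀ i ∈ Finset.Icc 1 N, 0 ≤ s i) (ht : ∀ i ∈ Finset.Icc 1 N, 0 ≤ t i)
    (h1 : s 1 ≤ t 1) {η : ℝ}
    (hη : ∀ i ∈ Finset.Icc 1 N, |trajOfS N p t (t i) - trajOfS N p s (s i)| ≤ η) :
    ∀ i ∈ Finset.Icc 1 N, -(qq p N * η / p 1 ^ 2) ≤ t i - s i := by
  have h1mem : 1 ∈ Finset.Icc 1 N := Finset.mem_Icc.mpr ⟨le_rfl, hN⟩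
  have hδ₁ : p 1 * (t 1 - s 1) ≤ η := by
    have := sub_le_of_trajOfS_sub_le hN hp1 hp hs ht h1
      (fun i hi => (le_abs_self _).trans (hη i hi)) 1 h1mem
    rwa [le_div_iff₀ hp1, mul_comm] at this
  obtain ⟨i₁, hi₁, hmin⟩ :=
    Finset.exists_min_image (Finset.Icc 1 N) (fun i => t i - s i) ⟨1, h1mem⟩
  have hterm : ∀ j ∈ (Finset.Icc 1 N).erase 1,
      p j * (pos' (t i₁ - t j + t 1) - pos' (s i₁ - s j + s 1)) ≤ p j * (t 1 - s 1) := by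
    intro j hj
    refine mul_le_mul_of_nonneg_left ?_ (hp j (Finset.mem_of_mem_erase hj))
    exact pos'_sub_pos'_le (by linarith [hmin j (Finset.mem_of_mem_erase hj)]) (by linarith)
  have hrest : 0 ≤ qq p N - p 1 := by
    rw [qq, ← Finset.sum_erase_eq_sub h1mem]
    exact Finset.sum_nonneg fun j hj => hp j (Finset.mem_of_mem_erase hj)
  have hkey : -η ≤ p 1 * (t i₁ - s i₁) + (qq p N - p 1) * (t 1 - s 1) := by
    calc -η ≤ trajOfS N p t (t i₁) - trajOfS N p s (s i₁) := neg_le_of_abs_le (hη i₁ hi₁)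
      _ = p 1 * (t i₁ - s i₁) + ∑ j ∈ (Finset.Icc 1 N).erase 1,
            p j * (pos' (t i₁ - t j + t 1) - pos' (s i₁ - s j + s 1)) := by
          rw [trajOfS_sub_trajOfS, ← Finset.add_sum_erase _ _ h1mem]
          simp only [sub_add_cancel, pos'_of_nonneg (hs i₁ hi₁), pos'_of_nonneg (ht i₁ hi₁)]
      _ ≤ p 1 * (t i₁ - s i₁) + (qq p N - p 1) * (t 1 - s 1) := by
          grw [Finset.sum_le_sum hterm, ← Finset.sum_mul, Finset.sum_erase_eq_sub h1mem]
          rfl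
  intro i hi
  rw [neg_le, le_div_iff₀ (by positivity)]
  nlinarith [hmin i hi, mul_le_mul_of_nonneg_left hδ₁ hrest]

theorem abs_sub_le_of_abs_trajOfS_sub_le (hN : 1 ≤ N) (hp1 : 0 < p 1)
    (hp : ∀ j ∈ Finset.Icc 1 N, 0 ≤ p j)
    (hs : ∀ i ∈ Finset.Icc 1 N, 0 ≤ s i) (ht : ∀ i ∈ Finset.Icc 1 N, 0 ≤ t i) {η : ℝ}
    (hη : ∀ i ∈ Finset.Icc 1 N, |trajOfS N p t (t i) - trajOfS N p s (s i)| ≤ η) :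
    ∀ i ∈ Finset.Icc 1 N, |t i - s i| ≤ qq p N * η / p 1 ^ 2 := by
  wlog h1 : s 1 ≤ t 1 generalizing s t
  · intro i hi
    rw [abs_sub_comm]
    exact this ht hs (fun i hi => abs_sub_comm (trajOfS N p s (s i)) _ ▸ hη i hi)
      (le_of_not_ge h1) i hi
  have h1mem : 1 ∈ Finset.Icc 1 N := Finset.mem_Icc.mpr ⟨le_rfl, hN⟩
  have hη0 : 0 ≤ η := (abs_nonneg _).trans (hη 1 h1mem)
  have hp1q : p 1 ≤ qq p N := Finset.single_le_sum hp h1mem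
  intro i hi
  refine abs_le.mpr ⟨le_sub_of_abs_trajOfS_sub_le hN hp1 hp hs ht h1 hη i hi, ?_⟩
  calc t i - s i ≤ η / p 1 :=
        sub_le_of_trajOfS_sub_le hN hp1 hp hs ht h1
          (fun i hi => (le_abs_self _).trans (hη i hi)) i hi
    _ = p 1 * η / p 1 ^ 2 := by field_simp
    _ ≤ qq p N * η / p 1 ^ 2 := by gcongr

end Stability

lemma trajOfS_succ (M : ℕ) (p s : ℕ → ℝ) (x : ℝ) :
    trajOfS (M + 1) p s x = trajOfS M p s x + p (M + 1) * pos' (x - s (M + 1) + s 1) :=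
  Finset.sum_Icc_succ_top (by omega) _

lemma trajOfS_congr {M : ℕ} (hM : 1 ≤ M) {p p' s s' : ℕ → ℝ}
    (hp : ∀ j ∈ Finset.Icc 1 M, p j = p' j) (hs : ∀ j ∈ Finset.Icc 1 M, s j = s' j) :
    trajOfS M p s = trajOfS M p' s' := by
  funext x
  simp only [trajOfS, hs 1 (Finset.mem_Icc.mpr ⟨le_rfl, hM⟩)]
  exact Finset.sum_congr rfl fun j hj => by rw [hp j hj, hs j hj]

lemma trajOfS_eq_add_of_le {M : ℕ} {p s : ℕ → ℝ} {u x : ℝ}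
    (hu : ∀ j ∈ Finset.Icc 1 M, s j - s 1 ≤ u) (hux : u ≤ x) :
    trajOfS M p s x = trajOfS M p s u + qq p M * (x - u) := by
  simp only [trajOfS, qq, Finset.sum_mul, ← Finset.sum_add_distrib]
  refine Finset.sum_congr rfl fun j hj => ?_
  have := hu j hj
  rw [pos'_of_nonneg (by linarith), pos'_of_nonneg (by linarith)]
  ring

/-- The candidate limit: `s'`, extended by the point where the trajectory of `s'`, of slope
`qq p M` beyond `s' M`, reaches `a (M + 1)`. -/
noncomputable def limitTuple (M : ℕ) (a p s' : ℕ → ℝ) (i : ℕ) : ℝ :=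
  if i ≤ M then s' i else s' M + (a (M + 1) - a M) / qq p M

section LimitTuple

variable {M : ℕ} {a p s' : ℕ → ℝ}

lemma limitTuple_of_le {i : ℕ} (hi : i ≤ M) : limitTuple M a p s' i = s' i := if_pos hi

lemma limitTuple_last : limitTuple M a p s' (M + 1) = s' M + (a (M + 1) - a M) / qq p M :=
  if_neg (by omega)

lemma le_limitTuple_last (hs' : IsStationaryTuple M a p s') (ha : a M ≤ a (M + 1))
    (hq : 0 < qq p M) : ∀ j ∈ Finset.Icc 1 M, s' j ≤ limitTuple M a p s' (M + 1) := by
  intro j hj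
  obtain ⟨hj1, hjM⟩ := Finset.mem_Icc.mp hj
  rw [limitTuple_last]
  have := hs'.le_of_le hj1 hjM le_rfl
  have : 0 ≤ (a (M + 1) - a M) / qq p M := div_nonneg (by linarith) hq.le
  linarith

lemma limitTuple_pos (hM : 1 ≤ M) (hs' : IsStationaryTuple M a p s') (ha : a M ≤ a (M + 1))
    (hq : 0 < qq p M) : ∀ i ∈ Finset.Icc 1 (M + 1), 0 < limitTuple M a p s' i := by
  intro i hi
  obtain ⟨hi1, hiM⟩ := Finset.mem_Icc.mp hi
  have hMmem : M ∈ Finset.Icc 1 M := Finset.mem_Icc.mpr ⟨hM, le_rfl⟩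
  obtain hiM' | rfl : i ≤ M ∨ i = M + 1 := by omega
  · rw [limitTuple_of_le hiM']
    exact hs'.pos (Finset.mem_Icc.mpr ⟨hi1, hiM'⟩)
  · exact (hs'.pos hMmem).trans_le (le_limitTuple_last hs' ha hq M hMmem)

lemma trajOfS_limitTuple (hM : 1 ≤ M) (ε x : ℝ) :
    trajOfS (M + 1) (fun j => if j = M + 1 then ε else p j) (limitTuple M a p s') x =
      trajOfS M p s' x + ε * pos' (x - limitTuple M a p s' (M + 1) + s' 1) := by
  have hs : ∀ j ∈ Finset.Icc 1 M, limitTuple M a p s' j = s' j := fun j hj =>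
    limitTuple_of_le (Finset.mem_Icc.mp hj).2
  rw [trajOfS_succ, if_pos rfl, hs 1 (Finset.mem_Icc.mpr ⟨le_rfl, hM⟩),
    trajOfS_congr hM (fun j hj => if_neg (by have := (Finset.mem_Icc.mp hj).2; omega)) hs]

lemma abs_sub_trajOfS_limitTuple_le (hM : 1 ≤ M) (hs' : IsStationaryTuple M a p s')
    (ha : a M ≤ a (M + 1)) (hq : 0 < qq p M) {ε : ℝ} (hε : 0 ≤ ε) :
    ∀ i ∈ Finset.Icc 1 (M + 1),
      |a i - trajOfS (M + 1) (fun j => if j = M + 1 then ε else p j)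
        (limitTuple M a p s') (limitTuple M a p s' i)| ≤ ε * s' 1 := by
  intro i hi
  obtain ⟨hi1, hiM⟩ := Finset.mem_Icc.mp hi
  have hs'1 : 0 < s' 1 := hs'.1
  rw [trajOfS_limitTuple hM]
  obtain hiM' | rfl : i ≤ M ∨ i = M + 1 := by omega
  · have hle := le_limitTuple_last hs' ha hq i (Finset.mem_Icc.mpr ⟨hi1, hiM'⟩)
    rw [limitTuple_of_le hiM', hs'.trajOfS_self (Finset.mem_Icc.mpr ⟨hi1, hiM'⟩)]
    have h0 : 0 ≤ pos' (s' i - limitTuple M a p s' (M + 1) + s' 1) := le_max_right _ _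
    have h1 : pos' (s' i - limitTuple M a p s' (M + 1) + s' 1) ≤ s' 1 :=
      max_le (by linarith) hs'1.le
    rw [abs_le]
    constructor <;> nlinarith
  · have hMmem : M ∈ Finset.Icc 1 M := Finset.mem_Icc.mpr ⟨hM, le_rfl⟩
    have hlast : trajOfS M p s' (limitTuple M a p s' (M + 1)) = a (M + 1) := by
      rw [trajOfS_eq_add_of_le (u := s' M) _ (le_limitTuple_last hs' ha hq M hMmem),
        hs'.trajOfS_self hMmem, limitTuple_last]
      · field_simp
        ring
      · intro j hj
        have := hs'.le_of_le (Finset.mem_Icc.mp hj).1 (Finset.mem_Icc.mp hj).2 le_rfl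
        linarith
    rw [hlast, sub_self, zero_add, pos'_of_nonneg hs'1.le, sub_add_cancel_left, abs_neg,
      abs_of_nonneg (by positivity)]

end LimitTuple

lemma qq_ite_succ (M : ℕ) (p : ℕ → ℝ) (ε : ℝ) :
    qq (fun j => if j = M + 1 then ε else p j) (M + 1) = qq p M + ε := by
  rw [qq, Finset.sum_Icc_succ_top (by omega), if_pos rfl, qq]
  congr 1
  exact Finset.sum_congr rfl fun j hj => if_neg (by have := (Finset.mem_Icc.mp hj).2; omega)

section Perturbation

variable {M : ℕ} {a p s' : ℕ → ℝ}

theorem abs_sub_limitTuple_le (hM : 1 ≤ M) (hp : ∀ j ∈ Finset.Icc 1 M, 0 < p j)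
    (hs' : IsStationaryTuple M a p s') (ha : a M ≤ a (M + 1)) {ε : ℝ} (hε : 0 ≤ ε)
    {s : ℕ → ℝ}
    (hs : IsStationaryTuple (M + 1) a (fun j => if j = M + 1 then ε else p j) s) :
    ∀ i ∈ Finset.Icc 1 (M + 1),
      |s i - limitTuple M a p s' i| ≤ (qq p M + ε) * (ε * s' 1) / p 1 ^ 2 := by
  have hM0 : M ≠ 0 := by omega
  have hq : 0 < qq p M := Finset.sum_pos hp ⟨1, Finset.mem_Icc.mpr ⟨le_rfl, hM⟩⟩
  have hpε : ∀ j ∈ Finset.Icc 1 (M + 1), 0 ≤ (if j = M + 1 then ε else p j) := by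
    intro j hj
    obtain ⟨hj1, hjM⟩ := Finset.mem_Icc.mp hj
    split_ifs with hjM'
    · exact hε
    · exact (hp j (Finset.mem_Icc.mpr ⟨hj1, by omega⟩)).le
  have hres : ∀ i ∈ Finset.Icc 1 (M + 1),
      |trajOfS (M + 1) (fun j => if j = M + 1 then ε else p j) s (s i) -
        trajOfS (M + 1) _ (limitTuple M a p s') (limitTuple M a p s' i)| ≤ ε * s' 1 :=
    fun i hi => hs.trajOfS_self hi ▸ abs_sub_trajOfS_limitTuple_le hM hs' ha hq hε i hi
  have := abs_sub_le_of_abs_trajOfS_sub_le (by omega)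
    (by simpa [hM0] using hp 1 (Finset.mem_Icc.mpr ⟨le_rfl, hM⟩)) hpε
    (fun i hi => (limitTuple_pos hM hs' ha hq i hi).le) (fun i hi => (hs.pos hi).le) hres
  simpa [qq_ite_succ, hM0] using this

theorem tendsto_limitTuple (hM : 1 ≤ M) (hp : ∀ j ∈ Finset.Icc 1 M, 0 < p j)
    (hs' : IsStationaryTuple M a p s') (ha : a M ≤ a (M + 1)) {S : ℝ → ℕ → ℝ}
    (hS : ∀ ε : ℝ, 0 < ε →
      IsStationaryTuple (M + 1) a (fun j => if j = M + 1 then ε else p j) (S ε))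
    {i : ℕ} (hi : i ∈ Finset.Icc 1 (M + 1)) :
    Tendsto (fun ε => S ε i) (𝓝[>] 0) (𝓝 (limitTuple M a p s' i)) := by
  have hbound :
      Tendsto (fun ε : ℝ => (qq p M + ε) * (ε * s' 1) / p 1 ^ 2) (𝓝[>] 0) (𝓝 0) := by
    have : Continuous fun ε : ℝ => (qq p M + ε) * (ε * s' 1) / p 1 ^ 2 := by fun_prop
    simpa using (this.tendsto 0).mono_left nhdsWithin_le_nhds
  rw [tendsto_iff_norm_sub_tendsto_zero]
  exact squeeze_zero' (Eventually.of_forall fun _ => norm_nonneg _)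
    (eventually_nhdsWithin_of_forall fun ε hε =>
      abs_sub_limitTuple_le hM hp hs' ha hε.le (hS ε hε) i hi) hbound

end Perturbation

theorem stmt_18_general (N : ℕ) (hN : 2 ≤ N) (a p : ℕ → ℝ)
    (ha : ∀ i, 1 ≤ i → i < N → a i < a (i + 1))
    (hp : ∀ i, 1 ≤ i → i ≤ N - 1 → 0 < p i)
    (S : ℝ → ℕ → ℝ)
    (hS : ∀ ε : ℝ, 0 < ε → IsStationaryTuple N a (fun j => if j = N then ε else p j) (S ε))
    (s' : ℕ → ℝ) (hs' : IsStationaryTuple (N - 1) a p s') :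
    (∀ i, 1 ≤ i → i ≤ N - 1 →
      Filter.Tendsto (fun ε => S ε i - (if i = 1 then 0 else S ε (i - 1)))
        (nhdsWithin 0 (Set.Ioi 0))
        (nhds (s' i - (if i = 1 then 0 else s' (i - 1))))) ∧
    Filter.Tendsto (fun ε => S ε N - S ε (N - 1)) (nhdsWithin 0 (Set.Ioi 0))
      (nhds ((a N - a (N - 1)) / qq p (N - 1))) := by
  obtain ⟨M, rfl⟩ : ∃ M, N = M + 1 := ⟨N - 1, by omega⟩
  simp only [Nat.add_sub_cancel] at hp hs' ⊢
  have hM : 1 ≤ M := by omega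
  have hlim : ∀ i, 1 ≤ i → i ≤ M + 1 →
      Tendsto (fun ε => S ε i) (𝓝[>] 0) (𝓝 (limitTuple M a p s' i)) := fun i hi1 hiM =>
    tendsto_limitTuple hM (fun j hj => hp j (Finset.mem_Icc.mp hj).1 (Finset.mem_Icc.mp hj).2)
      hs' (ha M hM (by omega)).le hS (Finset.mem_Icc.mpr ⟨hi1, hiM⟩)
  refine ⟨fun i hi1 hiM => ?_, ?_⟩
  · have hi := hlim i hi1 (by omega)
    rw [limitTuple_of_le hiM] at hi
    split_ifs with hi1'
    · simpa using hi
    · have hprev := hlim (i - 1) (by omega) (by omega)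
      rw [limitTuple_of_le (by omega)] at hprev
      exact hi.sub hprev
  · have h := (hlim (M + 1) (by omega) le_rfl).sub (hlim M hM (by omega))
    rwa [limitTuple_last, limitTuple_of_le le_rfl, add_sub_cancel_left] at h

/-- behaviour of the stationary tuple as `p N → 0⁺`, Lemma 4.12. -/
theorem stmt_18 (N : ℕ) (hN : 2 ≤ N) (a p : ℕ → ℝ)
    (ha1 : 0 < a 1) (ha : ∀ i, 1 ≤ i → i < N → a i < a (i + 1))
    (hp : ∀ i, 1 ≤ i → i ≤ N - 1 → 0 < p i)
    (S : ℝ → ℕ → ℝ)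
    (hS : ∀ ε : ℝ, 0 < ε → IsStationaryTuple N a (fun j => if j = N then ε else p j) (S ε))
    (s' : ℕ → ℝ) (hs' : IsStationaryTuple (N - 1) a p s') :
    (∀ i, 1 ≤ i → i ≤ N - 1 →
      Filter.Tendsto (fun ε => S ε i - (if i = 1 then 0 else S ε (i - 1)))
        (nhdsWithin 0 (Set.Ioi 0))
        (nhds (s' i - (if i = 1 then 0 else s' (i - 1))))) ∧
    Filter.Tendsto (fun ε => S ε N - S ε (N - 1)) (nhdsWithin 0 (Set.Ioi 0))
      (nhds ((a N - a (N - 1)) / qq p (N - 1))) :=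
  stmt_18_general N hN a p ha hp S hS s' hs'
end

section
/- Let G be a DC graph on {1,...,N} and let (a,p) ∈ P^{2N} be such that (G,a,p) satisfies (C_{m(G)}^≥) and (C_{M(G)}^≤). Then z_i^G(a,p) > 0 for every i ∈ {1,...,N}, and the vector of cumulative sums (Z^G_{0,i}(a,p))_{i=1,...,N} = (z_1^G(a,p) + ... + z_i^G(a,p))_{i=1,...,N} is the unique stationary tuple s(a,p) for (a,p); in particular z_i^G(a,p) = s_i(a,p) − s_{i−1}(a,p) for every i (with s_0(a,p) := 0). -/
/-!
Expanding every path sum `Γ_{i,j}` along its first edge turns the formula for `z_i` into the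
recursion `z_i = A_i + ∑_{i < k ≤ b(i)} γ_{i,k} z_k` (with `A_i = zTerm N a p E i`), which,
multiplied by `q_{b(i-1)}`, reads
`d_i = q_{b(i-1)} z_i + ∑_{b(i-1) < j ≤ b(i)} p_j (z_1 - Z_{i,j})`.
Positivity follows by downward induction on `i`: the minimal non-edge `(i-1, b(i-1)+1)` gives
`z_1 - Z_{i,j} ≤ z_i` for every `j` in the sum, hence `0 < d_i ≤ q_{b(i)} z_i`.
Summing these identities, the partial sums `s_i = Z_{0,i}` satisfy
`a_i = ∑_{j ≤ b(i)} p_j (s_i - s_j + s_1)`. By nesting in maximal edges and minimal non-edges,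
the two conditions say that `s_i - s_j + s_1` is `≥ 0` for `j ≤ b(i)` and `≤ 0` beyond, so the
positive parts in the stationarity equations are exactly the terms kept here.
Uniqueness of stationary tuples is a comparison principle.
-/

open Filter Topology
open scoped Classical

lemma mem_ENfin {N i j : ℕ} : (i, j) ∈ ENfin N ↔ 1 ≤ i ∧ i < j ∧ j ≤ N := by
  simp only [ENfin, Finset.mem_filter, Finset.mem_product, Finset.mem_Icc]
  omega

section qq

variable {N : ℕ} {p : ℕ → ℝ}

lemma qq_sub {i j : ℕ} (hij : i ≤ j) : qq p j - qq p i = ∑ l ∈ Finset.Ioc i j, p l := by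
  have hIcc (n : ℕ) : Finset.Icc 1 n = Finset.Ioc 0 n := Finset.Icc_succ_left_eq_Ioc 0 n
  rw [qq, qq, hIcc, hIcc, ← Finset.sum_Ioc_consecutive p (Nat.zero_le i) hij, add_sub_cancel_left]

variable (hp : ∀ i, 1 ≤ i → i ≤ N → 0 < p i)
include hp

lemma qq_pos {i : ℕ} (h1 : 1 ≤ i) (h2 : i ≤ N) : 0 < qq p i :=
  Finset.sum_pos (fun l hl => hp l (Finset.mem_Icc.1 hl).1 ((Finset.mem_Icc.1 hl).2.trans h2))
    ⟨1, Finset.mem_Icc.2 ⟨le_rfl, h1⟩⟩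

lemma qq_mono {i j : ℕ} (hij : i ≤ j) (hj : j ≤ N) : qq p i ≤ qq p j := by
  rw [← sub_nonneg, qq_sub hij]
  exact Finset.sum_nonneg fun l hl =>
    (hp l (by simp only [Finset.mem_Ioc] at hl; omega) ((Finset.mem_Ioc.1 hl).2.trans hj)).le

end qq

namespace IsStationaryTuple

variable {N : ℕ} {a p s s' : ℕ → ℝ}

lemma first_le (hs : IsStationaryTuple N a p s) {i : ℕ} (h1 : 1 ≤ i) (h2 : i ≤ N) :
    s 1 ≤ s i := by
  induction i, h1 using Nat.le_induction with
  | base => exact le_rfl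
  | succ i hi ih => exact (ih (by omega)).trans (hs.2.1 i hi h2).le

/-- Comparison principle: at an index `i` where `s - s'` is maximal, every term of the equation
for `a i` is at least as large for `s` as for `s'`, so all of them agree; the term `j = 1` then
forces `s i = s' i`. -/
lemma le_of_first_ge (hp : ∀ i, 1 ≤ i → i ≤ N → 0 < p i) (hN : 1 ≤ N)
    (hs : IsStationaryTuple N a p s) (hs' : IsStationaryTuple N a p s') (h1 : s' 1 ≤ s 1)
    {j : ℕ} (hj1 : 1 ≤ j) (hjN : j ≤ N) : s j ≤ s' j := by
  obtain ⟨i, hi, hmax⟩ := Finset.exists_max_image (Finset.Icc 1 N) (fun j => s j - s' j)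
    ⟨1, Finset.mem_Icc.2 ⟨le_rfl, hN⟩⟩
  obtain ⟨hi1, hiN⟩ := Finset.mem_Icc.1 hi
  have hterm : ∀ j ∈ Finset.Icc 1 N,
      p j * pos' (s' i - s' j + s' 1) ≤ p j * pos' (s i - s j + s 1) := fun j hj =>
    mul_le_mul_of_nonneg_left (max_le_max (by linarith [hmax j hj]) le_rfl)
      (hp j (Finset.mem_Icc.1 hj).1 (Finset.mem_Icc.1 hj).2).le
  have hall := (Finset.sum_eq_sum_iff_of_le hterm).1
    (by rw [← hs.2.2 i hi1 hiN, ← hs'.2.2 i hi1 hiN])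
  have h1i := hall 1 (Finset.mem_Icc.2 ⟨le_rfl, hN⟩)
  rw [sub_add_cancel, sub_add_cancel, pos', pos',
    max_eq_left (hs'.1.le.trans (hs'.first_le hi1 hiN)),
    max_eq_left (hs.1.le.trans (hs.first_le hi1 hiN))] at h1i
  have := mul_left_cancel₀ (hp 1 le_rfl hN).ne' h1i
  linarith [hmax j (Finset.mem_Icc.2 ⟨hj1, hjN⟩)]

lemma eq (hp : ∀ i, 1 ≤ i → i ≤ N → 0 < p i) (hN : 1 ≤ N)
    (hs : IsStationaryTuple N a p s) (hs' : IsStationaryTuple N a p s')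
    {j : ℕ} (hj1 : 1 ≤ j) (hjN : j ≤ N) : s j = s' j := by
  wlog h : s' 1 ≤ s 1 generalizing s s'
  · exact (this hs' hs (le_of_not_ge h)).symm
  have h' : s 1 ≤ s' 1 := hs.le_of_first_ge hp hN hs' h le_rfl hN
  exact (hs.le_of_first_ge hp hN hs' h hj1 hjN).antisymm (hs'.le_of_first_ge hp hN hs h' hj1 hjN)

end IsStationaryTuple

section bG

variable {N : ℕ} {E : Finset (ℕ × ℕ)}

lemma bG_zero : bG E 0 = 1 := rfl

lemma le_bG (i : ℕ) : i ≤ bG E i := by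
  unfold bG
  split_ifs
  · omega
  · exact le_max_left _ _

lemma one_le_bG (i : ℕ) : 1 ≤ bG E i := by
  rcases Nat.eq_zero_or_pos i with rfl | hi
  · exact le_rfl
  · exact le_trans hi (le_bG i)

lemma bG_le (hE : IsDCGraph N E) (hN : 1 ≤ N) {i : ℕ} (hi : i ≤ N) : bG E i ≤ N := by
  unfold bG
  split_ifs
  · exact hN
  · refine max_le hi (Finset.sup_le fun e he => ?_)
    exact (mem_ENfin.1 (hE.1 (Finset.mem_filter.1 he).1)).2.2

lemma mem_iff_lt_le_bG (hE : IsDCGraph N E) {i j : ℕ} (hi : 1 ≤ i) :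
    (i, j) ∈ E ↔ i < j ∧ j ≤ bG E i := by
  rw [bG, if_neg (by omega)]
  constructor
  · intro h
    exact ⟨(mem_ENfin.1 (hE.1 h)).2.1,
      le_max_of_le_right (Finset.le_sup (f := fun e => e.2) (s := E.filter fun e => e.1 = i)
        (Finset.mem_filter.2 ⟨h, rfl⟩))⟩
  · rintro ⟨hij, hjb⟩
    have hsup : j ≤ (E.filter fun e => e.1 = i).sup fun e => e.2 := by
      rcases le_max_iff.1 hjb with h | h
      · omega
      · exact h
    obtain ⟨e, he, hje⟩ := (Finset.le_sup_iff (by simp only [bot_eq_zero']; omega)).1 hsup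
    obtain ⟨heE, hei⟩ := Finset.mem_filter.1 he
    exact hE.2 e heE (i, j) ⟨hei.le, hij, hje⟩

lemma bG_monotone (hE : IsDCGraph N E) : Monotone (bG E) := by
  refine monotone_nat_of_le_succ fun i => ?_
  rcases Nat.eq_zero_or_pos i with rfl | hi
  · exact one_le_bG 1
  rcases le_or_gt (bG E i) (i + 1) with hb | hb
  · exact hb.trans (le_bG _)
  · have hedge : (i, bG E i) ∈ E := (mem_iff_lt_le_bG hE hi).2 ⟨by omega, le_rfl⟩
    exact ((mem_iff_lt_le_bG hE (by omega)).1 (hE.2 _ hedge _ ⟨by omega, hb, le_rfl⟩)).2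

end bG

section GammaPath

variable {E : Finset (ℕ × ℕ)} {γ : ℕ → ℕ → ℝ}

def pathWeight (E : Finset (ℕ × ℕ)) (γ : ℕ → ℕ → ℝ) (l : List ℕ) : ℝ :=
  if List.IsChain (fun u v => (u, v) ∈ E) l then pathProd γ l else 0

lemma pathWeight_singleton (x : ℕ) : pathWeight E γ [x] = 1 := by
  simp [pathWeight, pathProd]

lemma pathWeight_cons_cons (x y : ℕ) (l : List ℕ) :
    pathWeight E γ (x :: y :: l) =
      if (x, y) ∈ E then γ x y * pathWeight E γ (y :: l) else 0 := by
  by_cases hxy : (x, y) ∈ E <;> simp [pathWeight, pathProd, hxy, List.isChain_cons_cons]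

lemma sort_insert_of_lt {m : ℕ} {T : Finset ℕ} (h : ∀ x ∈ T, m < x) :
    Finset.sort (insert m T) (· ≤ ·) = m :: Finset.sort T (· ≤ ·) :=
  Finset.sort_insert _ (fun x hx => (h x hx).le) fun hm => lt_irrefl m (h m hm)

lemma GammaPath_self (i : ℕ) : GammaPath E γ i i = 1 := by simp [GammaPath]

lemma GammaPath_of_lt {i j : ℕ} (h : j < i) : GammaPath E γ i j = 0 := by
  rw [GammaPath, if_neg (by omega), if_neg (by omega)]

lemma GammaPath_eq_sum_powerset {i j : ℕ} (hij : i < j) :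
    GammaPath E γ i j =
      ∑ S ∈ (Finset.Ioo i j).powerset,
        pathWeight E γ (i :: Finset.sort (insert j S) (· ≤ ·)) := by
  rw [GammaPath, if_neg hij.ne, if_pos hij]
  refine Finset.sum_congr rfl fun S hS => ?_
  rw [sort_insert_of_lt]
  · exact if_congr Iff.rfl rfl rfl
  · intro x hx
    rcases Finset.mem_insert.1 hx with rfl | hx
    · exact hij
    · exact (Finset.mem_Ioo.1 (Finset.mem_powerset.1 hS hx)).1

/-- Groups the paths `i₀ → S → j` with `S ⊆ (m, j)` by their second vertex `k`. -/
lemma sum_powerset_Ioo_pathWeight (i₀ : ℕ) {m j : ℕ} (hmj : m < j) :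
    ∑ S ∈ (Finset.Ioo m j).powerset,
        pathWeight E γ (i₀ :: Finset.sort (insert j S) (· ≤ ·)) =
      ∑ k ∈ Finset.Ioc m j, if (i₀, k) ∈ E then γ i₀ k * GammaPath E γ k j else 0 := by
  by_cases hj : m + 1 < j
  swap
  · have hIoo : Finset.Ioo m j = ∅ := by
      ext
      simp only [Finset.mem_Ioo, Finset.notMem_empty, iff_false]
      omega
    have hIoc : Finset.Ioc m j = {j} := by
      ext
      simp only [Finset.mem_Ioc, Finset.mem_singleton]
      omega
    simp [hIoo, hIoc, pathWeight_cons_cons, pathWeight_singleton, GammaPath_self]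
  have hIoo : Finset.Ioo m j = insert (m + 1) (Finset.Ioo (m + 1) j) := by
    ext; simp only [Finset.mem_insert, Finset.mem_Ioo]; omega
  have hIoc : Finset.Ioc m j = insert (m + 1) (Finset.Ioc (m + 1) j) := by
    ext; simp only [Finset.mem_insert, Finset.mem_Ioc]; omega
  have hsort : ∀ T ∈ (Finset.Ioo (m + 1) j).powerset,
      Finset.sort (insert j (insert (m + 1) T)) (· ≤ ·) =
        (m + 1) :: Finset.sort (insert j T) (· ≤ ·) := by
    intro T hT
    rw [Finset.insert_comm, sort_insert_of_lt]
    intro x hx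
    rcases Finset.mem_insert.1 hx with rfl | hx
    · exact hj
    · exact (Finset.mem_Ioo.1 (Finset.mem_powerset.1 hT hx)).1
  rw [hIoo, Finset.sum_powerset_insert (by simp), hIoc, Finset.sum_insert (by simp),
    sum_powerset_Ioo_pathWeight i₀ hj, add_comm, Finset.sum_congr rfl fun T hT => by
      rw [hsort T hT, pathWeight_cons_cons]]
  congr 1
  split_ifs
  · rw [GammaPath_eq_sum_powerset hj, Finset.mul_sum]
  · exact Finset.sum_const_zero
termination_by j - m

lemma GammaPath_eq_sum {i j : ℕ} (hij : i < j) :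
    GammaPath E γ i j =
      ∑ k ∈ Finset.Ioc i j, if (i, k) ∈ E then γ i k * GammaPath E γ k j else 0 := by
  rw [GammaPath_eq_sum_powerset hij, sum_powerset_Ioo_pathWeight i hij]

lemma GammaPath_eq_sum_Ioc {i j n : ℕ} (hij : i < j) (hjn : j ≤ n) :
    GammaPath E γ i j =
      ∑ k ∈ Finset.Ioc i n, if (i, k) ∈ E then γ i k * GammaPath E γ k j else 0 := by
  rw [GammaPath_eq_sum hij]
  refine Finset.sum_subset (Finset.Ioc_subset_Ioc_right hjn) fun k hk hkj => ?_
  simp only [Finset.mem_Ioc, not_and, not_le] at hk hkj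
  rw [GammaPath_of_lt (hkj hk.1), mul_zero, ite_self]

lemma GammaPath_nonneg (hγ : ∀ x y, (x, y) ∈ E → 0 ≤ γ x y) (i j : ℕ) :
    0 ≤ GammaPath E γ i j := by
  rcases lt_trichotomy i j with hij | rfl | hij
  · rw [GammaPath_eq_sum hij]
    refine Finset.sum_nonneg fun k hk => ?_
    have : j - k < j - i := by simp only [Finset.mem_Ioc] at hk; omega
    split_ifs with hik
    · exact mul_nonneg (hγ i k hik) (GammaPath_nonneg hγ k j)
    · exact le_rfl
  · rw [GammaPath_self]; exact zero_le_one
  · rw [GammaPath_of_lt hij]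
termination_by j - i

end GammaPath

noncomputable def zTerm (N : ℕ) (a p : ℕ → ℝ) (E : Finset (ℕ × ℕ)) (j : ℕ) : ℝ :=
  (dpar a j - z1G N a p E * (qq p (bG E j) - qq p (bG E (j - 1)))) / qq p (bG E (j - 1))

section zG

variable {N : ℕ} {a p : ℕ → ℝ} {E : Finset (ℕ × ℕ)}

lemma dpar_pos (hap : IsParam N a p) {j : ℕ} (h1 : 1 ≤ j) (h2 : j ≤ N) : 0 < dpar a j := by
  unfold dpar
  split_ifs with hj
  · exact hap.1
  · have := hap.2.1 (j - 1) (by omega) (by omega)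
    rw [Nat.sub_add_cancel h1] at this
    linarith

lemma qq_bG_pos (hap : IsParam N a p) (hE : IsDCGraph N E) (hN : 1 ≤ N) {i : ℕ} (hi : i ≤ N) :
    0 < qq p (bG E i) :=
  qq_pos hap.2.2 (one_le_bG i) (bG_le hE hN hi)

lemma qq_bG_sub_nonneg (hap : IsParam N a p) (hE : IsDCGraph N E) (hN : 1 ≤ N) {i j : ℕ}
    (hij : i ≤ j) (hj : j ≤ N) : 0 ≤ qq p (bG E j) - qq p (bG E i) :=
  sub_nonneg.2 (qq_mono hap.2.2 (bG_monotone hE hij) (bG_le hE hN hj))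

lemma gammaG_nonneg (hap : IsParam N a p) (hE : IsDCGraph N E) (hN : 1 ≤ N) {x y : ℕ}
    (hxy : (x, y) ∈ E) : 0 ≤ gammaG p E x y := by
  obtain ⟨hx, hxy', hyN⟩ := mem_ENfin.1 (hE.1 hxy)
  have hyb := ((mem_iff_lt_le_bG hE hx).1 hxy).2
  refine div_nonneg (sub_nonneg.2 (qq_mono hap.2.2 ?_ (bG_le hE hN (by omega))))
    (qq_bG_pos hap hE hN (by omega)).le
  exact max_le (by omega) (bG_monotone hE (Nat.sub_le x 1))

lemma GammaG_nonneg (hap : IsParam N a p) (hE : IsDCGraph N E) (hN : 1 ≤ N) (i j : ℕ) :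
    0 ≤ GammaG p E i j :=
  GammaPath_nonneg (fun _ _ => gammaG_nonneg hap hE hN) i j

lemma z1G_pos (hap : IsParam N a p) (hE : IsDCGraph N E) (hN : 1 ≤ N) : 0 < z1G N a p E := by
  have hQ {j : ℕ} (hj : j ∈ Finset.Icc 1 N) : 0 < qq p (bG E (j - 1)) :=
    qq_bG_pos hap hE hN (by simp only [Finset.mem_Icc] at hj; omega)
  refine div_pos (Finset.sum_pos' (fun j hj => ?_) ⟨1, by simp [hN], ?_⟩)
    (add_pos_of_pos_of_nonneg one_pos (Finset.sum_nonneg fun j hj => ?_))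
  · exact div_nonneg (mul_nonneg (GammaG_nonneg hap hE hN 1 j)
      (dpar_pos hap (Finset.mem_Icc.1 hj).1 (Finset.mem_Icc.1 hj).2).le) (hQ hj).le
  · rw [GammaG, GammaPath_self, one_mul]
    exact div_pos (dpar_pos hap le_rfl hN) (hQ (by simp [hN]))
  · exact div_nonneg (mul_nonneg (GammaG_nonneg hap hE hN 1 j)
      (qq_bG_sub_nonneg hap hE hN (Nat.sub_le j 1) (Finset.mem_Icc.1 hj).2)) (hQ hj).le

lemma zG_one : zG N a p E 1 = z1G N a p E := if_pos rfl

lemma sum_GammaG_mul_zTerm (i : ℕ) :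
    ∑ j ∈ Finset.Icc i N, GammaG p E i j * zTerm N a p E j =
      (∑ j ∈ Finset.Icc i N, GammaG p E i j * dpar a j / qq p (bG E (j - 1))) -
        z1G N a p E * ∑ j ∈ Finset.Icc i N,
          GammaG p E i j * (qq p (bG E j) - qq p (bG E (j - 1))) / qq p (bG E (j - 1)) := by
  rw [Finset.mul_sum, ← Finset.sum_sub_distrib]
  refine Finset.sum_congr rfl fun j _ => ?_
  rw [zTerm]
  ring

/-- For `i = 1` this is the defining equation of `z_1`, solved for `z_1`. -/
lemma zG_eq_sum (hap : IsParam N a p) (hE : IsDCGraph N E) (hN : 1 ≤ N) (i : ℕ) :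
    zG N a p E i = ∑ j ∈ Finset.Icc i N, GammaG p E i j * zTerm N a p E j := by
  rw [sum_GammaG_mul_zTerm, zG]
  split_ifs with h1
  · subst h1
    have hz1 := z1G_pos hap hE hN
    rw [z1G] at hz1 ⊢
    set c := ∑ j ∈ Finset.Icc 1 N,
      GammaG p E 1 j * (qq p (bG E j) - qq p (bG E (j - 1))) / qq p (bG E (j - 1))
    have hden : 1 + c ≠ 0 := fun h => by simp [h] at hz1
    field_simp
    ring
  · rfl

lemma zG_eq_zTerm_add (hap : IsParam N a p) (hE : IsDCGraph N E) (hN : 1 ≤ N) {i : ℕ}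
    (h1 : 1 ≤ i) (h2 : i ≤ N) :
    zG N a p E i =
      zTerm N a p E i + ∑ k ∈ Finset.Ioc i (bG E i), gammaG p E i k * zG N a p E k := by
  have hIcc : Finset.Icc i N = insert i (Finset.Ioc i N) := by
    ext; simp only [Finset.mem_Icc, Finset.mem_insert, Finset.mem_Ioc]; omega
  have hzk : ∀ k ∈ Finset.Ioc i N,
      ∑ j ∈ Finset.Ioc i N, GammaG p E k j * zTerm N a p E j = zG N a p E k := by
    intro k hk
    simp only [Finset.mem_Ioc] at hk
    rw [zG_eq_sum hap hE hN]
    refine (Finset.sum_subset (fun j hj => ?_) fun j hj hjk => ?_).symm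
    · simp only [Finset.mem_Icc, Finset.mem_Ioc] at hj ⊢; omega
    · simp only [Finset.mem_Icc, Finset.mem_Ioc, not_and, not_le] at hj hjk
      rw [GammaG, GammaPath_of_lt (show j < k by omega), zero_mul]
  have hfilter : (Finset.Ioc i N).filter (fun k => (i, k) ∈ E) = Finset.Ioc i (bG E i) := by
    ext k
    simp only [Finset.mem_filter, Finset.mem_Ioc, mem_iff_lt_le_bG hE h1]
    have := bG_le hE hN h2
    omega
  calc zG N a p E i
      = zTerm N a p E i + ∑ j ∈ Finset.Ioc i N, ∑ k ∈ Finset.Ioc i N,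
          if (i, k) ∈ E then gammaG p E i k * (GammaG p E k j * zTerm N a p E j) else 0 := by
        rw [zG_eq_sum hap hE hN, hIcc, Finset.sum_insert (by simp), GammaG, GammaPath_self,
          one_mul]
        congr 1
        refine Finset.sum_congr rfl fun j hj => ?_
        simp only [Finset.mem_Ioc] at hj
        rw [GammaG, GammaPath_eq_sum_Ioc hj.1 hj.2, Finset.sum_mul]
        refine Finset.sum_congr rfl fun k _ => ?_
        split_ifs <;> simp only [GammaG, mul_assoc, zero_mul]
    _ = zTerm N a p E i + ∑ k ∈ Finset.Ioc i N,
          if (i, k) ∈ E then gammaG p E i k * zG N a p E k else 0 := by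
        rw [Finset.sum_comm]
        congr 1
        refine Finset.sum_congr rfl fun k hk => ?_
        split_ifs
        · rw [← Finset.mul_sum, hzk k hk]
        · exact Finset.sum_const_zero
    _ = _ := by rw [← Finset.sum_filter, hfilter]

/-- `zG_eq_zTerm_add` multiplied by `q_{b(i-1)}`, with the double sum over `k ≤ j` exchanged. -/
lemma dpar_eq (hap : IsParam N a p) (hE : IsDCGraph N E) (hN : 1 ≤ N) {i : ℕ}
    (h1 : 1 ≤ i) (h2 : i ≤ N) :
    dpar a i = qq p (bG E (i - 1)) * zG N a p E i
      + ∑ j ∈ Finset.Ioc (bG E (i - 1)) (bG E i), p j * (z1G N a p E - ZG N a p E i j) := by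
  have hbb : bG E (i - 1) ≤ bG E i := bG_monotone hE (Nat.sub_le i 1)
  have hb : i - 1 ≤ bG E (i - 1) := le_bG _
  have hQ : qq p (bG E (i - 1)) ≠ 0 := (qq_bG_pos hap hE hN (by omega)).ne'
  have hswap : ∑ j ∈ Finset.Ioc (bG E (i - 1)) (bG E i), p j * ZG N a p E i j
      = ∑ k ∈ Finset.Ioc i (bG E i),
          (qq p (bG E i) - qq p (max (k - 1) (bG E (i - 1)))) * zG N a p E k := by
    simp only [ZG, Finset.Icc_add_one_left_eq_Ioc, Finset.mul_sum]
    rw [Finset.sum_comm' (t' := Finset.Ioc i (bG E i))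
      (s' := fun k => Finset.Ioc (max (k - 1) (bG E (i - 1))) (bG E i))
      (fun j k => by simp only [Finset.mem_Ioc]; omega)]
    refine Finset.sum_congr rfl fun k hk => ?_
    rw [← Finset.sum_mul, ← qq_sub (by simp only [Finset.mem_Ioc] at hk; omega)]
  have hsplit : ∑ j ∈ Finset.Ioc (bG E (i - 1)) (bG E i), p j * (z1G N a p E - ZG N a p E i j)
      = z1G N a p E * (qq p (bG E i) - qq p (bG E (i - 1)))
        - ∑ j ∈ Finset.Ioc (bG E (i - 1)) (bG E i), p j * ZG N a p E i j := by
    rw [qq_sub hbb, Finset.mul_sum, ← Finset.sum_sub_distrib]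
    exact Finset.sum_congr rfl fun j _ => by ring
  have hγ : ∑ k ∈ Finset.Ioc i (bG E i), qq p (bG E (i - 1)) * (gammaG p E i k * zG N a p E k)
      = ∑ k ∈ Finset.Ioc i (bG E i),
          (qq p (bG E i) - qq p (max (k - 1) (bG E (i - 1)))) * zG N a p E k :=
    Finset.sum_congr rfl fun k _ => by rw [gammaG]; field_simp
  rw [zG_eq_zTerm_add hap hE hN h1 h2, zTerm, mul_add, Finset.mul_sum, hγ, hsplit, hswap]
  field_simp
  ring

end zG

section Nested

lemma exists_maximal_nested {s : Finset (ℕ × ℕ)} {e : ℕ × ℕ} (he : e ∈ s)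
    (hlt : e.1 < e.2) :
    ∃ e' ∈ s, Nested e e' ∧ ∀ e'' ∈ s, Nested e' e'' → e'' = e' := by
  obtain ⟨e', he', hmax⟩ :=
    Finset.exists_max_image (s.filter (Nested e)) (fun x => x.2 - x.1)
    ⟨e, Finset.mem_filter.2 ⟨he, le_rfl, hlt, le_rfl⟩⟩
  obtain ⟨he's, hee'⟩ := Finset.mem_filter.1 he'
  refine ⟨e', he's, hee', fun e'' he'' he'e'' => ?_⟩
  have := hmax e'' (Finset.mem_filter.2 ⟨he'', le_trans he'e''.1 hee'.1, hlt,
    le_trans hee'.2.2 he'e''.2.2⟩)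
  unfold Nested at hee' he'e''
  ext <;> omega

lemma exists_minimal_nested {s : Finset (ℕ × ℕ)} {e : ℕ × ℕ} (he : e ∈ s)
    (hs : ∀ x ∈ s, x.1 < x.2) :
    ∃ e' ∈ s, Nested e' e ∧ ∀ e'' ∈ s, Nested e'' e' → e'' = e' := by
  obtain ⟨e', he', hmin⟩ :=
    Finset.exists_min_image (s.filter (Nested · e)) (fun x => x.2 - x.1)
    ⟨e, Finset.mem_filter.2 ⟨he, le_rfl, hs e he, le_rfl⟩⟩
  obtain ⟨he's, he'e⟩ := Finset.mem_filter.1 he'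
  refine ⟨e', he's, he'e, fun e'' he'' he''e' => ?_⟩
  have := hmin e'' (Finset.mem_filter.2 ⟨he'', le_trans he'e.1 he''e'.1, he''e'.2.1,
    le_trans he''e'.2.2 he'e.2.2⟩)
  unfold Nested at he'e he''e'
  ext <;> omega

variable {N : ℕ} {E : Finset (ℕ × ℕ)}

lemma exists_mem_maxE_nested (hE : IsDCGraph N E) {e : ℕ × ℕ} (he : e ∈ E) :
    ∃ e' ∈ maxE E, Nested e e' := by
  obtain ⟨e', he', hee', hmax⟩ :=
    exists_maximal_nested he (mem_ENfin.1 (hE.1 he : (e.1, e.2) ∈ ENfin N)).2.1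
  exact ⟨e', Finset.mem_filter.2 ⟨he', hmax⟩, hee'⟩

lemma exists_mem_minNE_nested {e : ℕ × ℕ} (he : e ∈ ENfin N \ E) :
    ∃ e' ∈ minNE N E, Nested e' e := by
  obtain ⟨e', he', he'e, hmin⟩ := exists_minimal_nested he fun x hx =>
    (mem_ENfin.1 ((Finset.mem_sdiff.1 hx).1 : (x.1, x.2) ∈ ENfin N)).2.1
  exact ⟨e', Finset.mem_filter.2 ⟨he', hmin⟩, he'e⟩

lemma mem_minNE_of_bG_lt (hE : IsDCGraph N E) {i : ℕ} (h1 : 1 ≤ i) (h2 : i + 1 ≤ N)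
    (hb : bG E i < bG E (i + 1)) : (i, bG E i + 1) ∈ minNE N E := by
  have hbN := bG_le hE (by omega) h2
  have hib : i ≤ bG E i := le_bG i
  have hnot : (i, bG E i + 1) ∉ E := by simp [mem_iff_lt_le_bG hE h1]
  refine Finset.mem_filter.2
    ⟨Finset.mem_sdiff.2 ⟨mem_ENfin.2 ⟨h1, by omega, by omega⟩, hnot⟩, ?_⟩
  rintro ⟨x, y⟩ hxy ⟨hix, hxy', hyb⟩
  have hxyE : (x, y) ∉ E := (Finset.mem_sdiff.1 hxy).2
  dsimp only at hix hxy' hyb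
  rcases hix.eq_or_lt with rfl | hix
  · rw [mem_iff_lt_le_bG hE h1] at hxyE
    rw [Prod.mk.injEq]
    omega
  · exact absurd ((mem_iff_lt_le_bG hE (by omega)).2
      ⟨hxy', hyb.trans (hb.trans_le (bG_monotone hE hix))⟩) hxyE

end Nested

section ZG

variable {N : ℕ} {a p : ℕ → ℝ} {E : Finset (ℕ × ℕ)}

lemma ZG_add {i j k : ℕ} (hij : i ≤ j) (hjk : j ≤ k) :
    ZG N a p E i j + ZG N a p E j k = ZG N a p E i k := by
  simp only [ZG, Finset.Icc_add_one_left_eq_Ioc]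
  exact Finset.sum_Ioc_consecutive _ hij hjk

lemma ZG_self_succ (i : ℕ) : ZG N a p E i (i + 1) = zG N a p E (i + 1) := by
  simp [ZG]

lemma ZG_pred_self {i : ℕ} (h : 1 ≤ i) : ZG N a p E (i - 1) i = zG N a p E i := by
  obtain ⟨k, rfl⟩ : ∃ k, i = k + 1 := ⟨i - 1, by omega⟩
  exact ZG_self_succ k

lemma ZG_le_ZG_of_nested (hpos : ∀ l, 1 ≤ l → l ≤ N → 0 ≤ zG N a p E l)
    {i j i' j' : ℕ} (h : Nested (i', j') (i, j)) (hi : 1 ≤ i) (hj : j ≤ N) :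
    ZG N a p E i' j' ≤ ZG N a p E i j := by
  obtain ⟨hii', -, hj'j⟩ := h
  refine Finset.sum_le_sum_of_subset_of_nonneg (Finset.Icc_subset_Icc (by omega) hj'j)
    fun l hl _ => ?_
  simp only [Finset.mem_Icc] at hl
  exact hpos l (by omega) (by omega)

/-- The bound comes from the minimal non-edge `(i - 1, b(i - 1) + 1)`. -/
lemma z1G_sub_ZG_le_zG (hE : IsDCGraph N E) (hN : 1 ≤ N)
    (hle : ∀ e ∈ minNE N E, z1G N a p E ≤ ZG N a p E e.1 e.2) {i j : ℕ} (h1 : 1 < i)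
    (h2 : i ≤ N) (hpos : ∀ l, i < l → l ≤ N → 0 ≤ zG N a p E l)
    (hj : j ∈ Finset.Ioc (bG E (i - 1)) (bG E i)) :
    z1G N a p E - ZG N a p E i j ≤ zG N a p E i := by
  simp only [Finset.mem_Ioc] at hj
  have hmin := hle _ (mem_minNE_of_bG_lt hE (i := i - 1) (by omega) (by omega)
    (by rw [Nat.sub_add_cancel h1.le]; omega))
  have hb : i - 1 ≤ bG E (i - 1) := le_bG _
  have hjN : j ≤ N := hj.2.trans (bG_le hE hN h2)
  have hleft : ZG N a p E (i - 1) (bG E (i - 1) + 1) + ZG N a p E (bG E (i - 1) + 1) j =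
      ZG N a p E (i - 1) j := ZG_add (by omega) hj.1
  have hright : ZG N a p E (i - 1) i + ZG N a p E i j = ZG N a p E (i - 1) j :=
    ZG_add (Nat.sub_le i 1) (by omega)
  have hfirst : ZG N a p E (i - 1) i = zG N a p E i := ZG_pred_self h1.le
  have htail : 0 ≤ ZG N a p E (bG E (i - 1) + 1) j := Finset.sum_nonneg fun l hl => by
    simp only [Finset.mem_Icc] at hl
    exact hpos l (by omega) (by omega)
  linarith

lemma zG_pos (hap : IsParam N a p) (hE : IsDCGraph N E) (hN : 1 ≤ N)
    (hle : ∀ e ∈ minNE N E, z1G N a p E ≤ ZG N a p E e.1 e.2) {i : ℕ} (h1 : 1 ≤ i)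
    (h2 : i ≤ N) : 0 < zG N a p E i := by
  rcases h1.eq_or_lt with rfl | h1'
  · exact zG_one.symm ▸ z1G_pos hap hE hN
  have ih : ∀ l, i < l → l ≤ N → 0 ≤ zG N a p E l := fun l hil hl =>
    (zG_pos hap hE hN hle (by omega) hl).le
  have hsum : ∑ j ∈ Finset.Ioc (bG E (i - 1)) (bG E i), p j * (z1G N a p E - ZG N a p E i j)
      ≤ (qq p (bG E i) - qq p (bG E (i - 1))) * zG N a p E i := by
    rw [qq_sub (bG_monotone hE (Nat.sub_le i 1)), Finset.sum_mul]
    refine Finset.sum_le_sum fun j hj =>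
      mul_le_mul_of_nonneg_left (z1G_sub_ZG_le_zG hE hN hle h1' h2 ih hj) ?_
    simp only [Finset.mem_Ioc] at hj
    exact (hap.2.2 j (by omega) (hj.2.trans (bG_le hE hN h2))).le
  have hprod : 0 < qq p (bG E i) * zG N a p E i := by
    linarith [dpar_eq hap hE hN h1 h2, dpar_pos hap h1 h2]
  exact pos_of_mul_pos_right hprod (qq_bG_pos hap hE hN h2).le
termination_by N - i

end ZG

section Stationary

variable {N : ℕ} {a p : ℕ → ℝ} {E : Finset (ℕ × ℕ)}

lemma sum_Icc_bG_sub_sum_Icc_bG_pred (hap : IsParam N a p) (hE : IsDCGraph N E) (hN : 1 ≤ N)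
    {i : ℕ} (h1 : 1 ≤ i) (h2 : i ≤ N) :
    ∑ j ∈ Finset.Icc 1 (bG E i), p j * (ZG N a p E 0 i - ZG N a p E 0 j + z1G N a p E) -
      ∑ j ∈ Finset.Icc 1 (bG E (i - 1)),
        p j * (ZG N a p E 0 (i - 1) - ZG N a p E 0 j + z1G N a p E) = dpar a i := by
  have hbb : bG E (i - 1) ≤ bG E i := bG_monotone hE (Nat.sub_le i 1)
  have hb : i - 1 ≤ bG E (i - 1) := le_bG _
  have hIcc (n : ℕ) : Finset.Icc 1 n = Finset.Ioc 0 n := Finset.Icc_succ_left_eq_Ioc 0 n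
  have hzi : ZG N a p E 0 i - ZG N a p E 0 (i - 1) = zG N a p E i := by
    rw [← ZG_add (Nat.zero_le _) (Nat.sub_le i 1), add_sub_cancel_left, ZG_pred_self h1]
  rw [dpar_eq hap hE hN h1 h2, hIcc, hIcc, ← Finset.sum_Ioc_consecutive _ (Nat.zero_le _) hbb,
    add_sub_right_comm, ← Finset.sum_sub_distrib, qq, hIcc, Finset.sum_mul]
  congr 1
  · exact Finset.sum_congr rfl fun j _ => by rw [← hzi]; ring
  · refine Finset.sum_congr rfl fun j hj => ?_
    simp only [Finset.mem_Ioc] at hj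
    rw [← ZG_add (Nat.zero_le i) (by omega : i ≤ j)]
    ring

lemma a_eq_sum_Icc_bG (hap : IsParam N a p) (hE : IsDCGraph N E) (hN : 1 ≤ N) {i : ℕ}
    (h1 : 1 ≤ i) (h2 : i ≤ N) :
    a i = ∑ j ∈ Finset.Icc 1 (bG E i),
      p j * (ZG N a p E 0 i - ZG N a p E 0 j + z1G N a p E) := by
  induction i, h1 using Nat.le_induction with
  | base =>
    have h := sum_Icc_bG_sub_sum_Icc_bG_pred hap hE hN le_rfl hN
    simpa [ZG, zG_one, dpar, bG_zero] using h.symm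
  | succ i hi ih =>
    have h := sum_Icc_bG_sub_sum_Icc_bG_pred hap hE hN (by omega) h2
    rw [Nat.add_sub_cancel, dpar, if_neg (by omega), Nat.add_sub_cancel, ← ih (by omega)] at h
    linarith

lemma ZG_le_z1G_of_mem (hE : IsDCGraph N E)
    (hge : ∀ e ∈ maxE E, ZG N a p E e.1 e.2 ≤ z1G N a p E)
    (hpos : ∀ l, 1 ≤ l → l ≤ N → 0 ≤ zG N a p E l) {i j : ℕ} (hij : (i, j) ∈ E) :
    ZG N a p E i j ≤ z1G N a p E := by
  obtain ⟨⟨u, v⟩, hmax, hnest⟩ := exists_mem_maxE_nested hE hij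
  have huv := mem_ENfin.1 (hE.1 (Finset.mem_filter.1 hmax).1)
  exact (ZG_le_ZG_of_nested hpos hnest huv.1 huv.2.2).trans (hge _ hmax)

lemma z1G_le_ZG_of_not_mem (hle : ∀ e ∈ minNE N E, z1G N a p E ≤ ZG N a p E e.1 e.2)
    (hpos : ∀ l, 1 ≤ l → l ≤ N → 0 ≤ zG N a p E l) {i j : ℕ}
    (hij : (i, j) ∈ ENfin N \ E) :
    z1G N a p E ≤ ZG N a p E i j := by
  obtain ⟨e, hmin, hnest⟩ := exists_mem_minNE_nested hij
  have hij' := mem_ENfin.1 (Finset.mem_sdiff.1 hij).1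
  exact (hle e hmin).trans (ZG_le_ZG_of_nested hpos hnest hij'.1 hij'.2.2)

lemma ZG_sub_ZG_add_z1G_nonneg (hE : IsDCGraph N E)
    (hge : ∀ e ∈ maxE E, ZG N a p E e.1 e.2 ≤ z1G N a p E)
    (hpos : ∀ l, 1 ≤ l → l ≤ N → 0 ≤ zG N a p E l) {i j : ℕ} (h1 : 1 ≤ i)
    (h2 : i ≤ N) (hj1 : 1 ≤ j) (hjb : j ≤ bG E i) :
    0 ≤ ZG N a p E 0 i - ZG N a p E 0 j + z1G N a p E := by
  rcases le_or_gt j i with hji | hij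
  · have hsplit : ZG N a p E 0 j + ZG N a p E j i = ZG N a p E 0 i := ZG_add (Nat.zero_le j) hji
    have hZ : 0 ≤ ZG N a p E j i := Finset.sum_nonneg fun l hl => by
      simp only [Finset.mem_Icc] at hl
      exact hpos l (by omega) (by omega)
    have hz1 : 0 ≤ z1G N a p E := zG_one ▸ hpos 1 le_rfl (by omega)
    linarith
  · have hsplit : ZG N a p E 0 i + ZG N a p E i j = ZG N a p E 0 j := ZG_add (Nat.zero_le i) hij.le
    linarith [ZG_le_z1G_of_mem hE hge hpos ((mem_iff_lt_le_bG hE h1).2 ⟨hij, hjb⟩)]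

lemma ZG_sub_ZG_add_z1G_nonpos (hE : IsDCGraph N E)
    (hle : ∀ e ∈ minNE N E, z1G N a p E ≤ ZG N a p E e.1 e.2)
    (hpos : ∀ l, 1 ≤ l → l ≤ N → 0 ≤ zG N a p E l) {i j : ℕ} (h1 : 1 ≤ i)
    (hbj : bG E i < j) (hjN : j ≤ N) :
    ZG N a p E 0 i - ZG N a p E 0 j + z1G N a p E ≤ 0 := by
  have hij : i < j := (le_bG i).trans_lt hbj
  have hZ := z1G_le_ZG_of_not_mem hle hpos (Finset.mem_sdiff.2
    ⟨mem_ENfin.2 ⟨h1, hij, hjN⟩, fun h => hbj.not_ge ((mem_iff_lt_le_bG hE h1).1 h).2⟩)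
  have hsplit : ZG N a p E 0 i + ZG N a p E i j = ZG N a p E 0 j := ZG_add (Nat.zero_le i) hij.le
  linarith

lemma isStationaryTuple_zG (hap : IsParam N a p) (hE : IsDCGraph N E) (hN : 1 ≤ N)
    (hge : ∀ e ∈ maxE E, ZG N a p E e.1 e.2 ≤ z1G N a p E)
    (hle : ∀ e ∈ minNE N E, z1G N a p E ≤ ZG N a p E e.1 e.2) :
    IsStationaryTuple N a p (fun i => ∑ l ∈ Finset.Icc 1 i, zG N a p E l) := by
  have hpos : ∀ l, 1 ≤ l → l ≤ N → 0 ≤ zG N a p E l := fun l h1 h2 =>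
    (zG_pos hap hE hN hle h1 h2).le
  have hS1 : ZG N a p E 0 1 = z1G N a p E := by simp [ZG, zG_one]
  change IsStationaryTuple N a p (ZG N a p E 0)
  refine ⟨hS1 ▸ z1G_pos hap hE hN, fun i h1 h2 => ?_, fun i h1 h2 => ?_⟩
  · rw [← ZG_add (Nat.zero_le i) (Nat.le_succ i), ZG_self_succ]
    linarith [zG_pos hap hE hN hle (by omega : 1 ≤ i + 1) h2]
  rw [a_eq_sum_Icc_bG hap hE hN h1 h2, hS1, eq_comm]
  refine (Finset.sum_subset (Finset.Icc_subset_Icc_right (bG_le hE hN h2)) fun j hj hjb => ?_)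
    |>.symm.trans (Finset.sum_congr rfl fun j hj => ?_)
  · simp only [Finset.mem_Icc, not_and, not_le] at hj hjb
    rw [pos', max_eq_right (ZG_sub_ZG_add_z1G_nonpos hE hle hpos h1 (hjb hj.1) hj.2), mul_zero]
  · simp only [Finset.mem_Icc] at hj
    rw [pos', max_eq_left (ZG_sub_ZG_add_z1G_nonneg hE hge hpos h1 h2 hj.1 hj.2)]

end Stationary

/-- positivity of the `z_i^G` and identification of the stationary tuple,
Lemma 4.8 of the paper. -/
theorem stmt_19 (N : ℕ) (hN : 1 ≤ N) (a p : ℕ → ℝ) (hap : IsParam N a p)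
    (E : Finset (ℕ × ℕ)) (hE : IsDCGraph N E)
    (hge : ∀ e ∈ maxE E, ZG N a p E e.1 e.2 ≤ z1G N a p E)
    (hle : ∀ e ∈ minNE N E, z1G N a p E ≤ ZG N a p E e.1 e.2) :
    (∀ i, 1 ≤ i → i ≤ N → 0 < zG N a p E i) ∧
    IsStationaryTuple N a p (fun i => ∑ l ∈ Finset.Icc 1 i, zG N a p E l) ∧
    ∀ s : ℕ → ℝ, IsStationaryTuple N a p s →
      ∀ i, 1 ≤ i → i ≤ N → s i = ∑ l ∈ Finset.Icc 1 i, zG N a p E l := by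
  have hstat := isStationaryTuple_zG hap hE hN hge hle
  exact ⟨fun i => zG_pos hap hE hN hle, hstat, fun s hs i => hs.eq hap.2.2 hN hstat⟩
end
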